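/- arXiv:1407.8108 — 4 statements merged into one kernel-verified Lean document; each statement's English description precedes it below -/
import Mathlib

section
/- Let A, B ∈ Matrix (Fin n) (Fin n) ℂ and u : ℝ → ℂ continuous with |u| ≤ M on [0,T]. Then the solution of x'(t) = A x(t) + u(t) B x(t), x(0) = x₀, admits the absolutely convergent series (Volterra) expansion x(t) = exp(tA)x₀ + ∑_{k=1}^∞ ∫_{0≤τ_k≤⋯≤τ_1≤t} u(τ₁)⋯u(τ_k) exp((t−τ₁)A) B exp((τ₁−τ₂)A) B ⋯ B exp(τ_k A) x₀ dτ₁⋯dτ_k for all t ∈ [0,T]. -/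
open MeasureTheory intervalIntegral

/-- The `k`-th term of the Volterra series: `volterraTerm A B u x₀ 0 t = exp (t A) x₀` and
`volterraTerm A B u x₀ (k+1) t
  = ∫₀ᵗ u τ • exp ((t-τ) A) B (volterraTerm A B u x₀ k τ) dτ`,
which unfolds to the iterated integral over the ordered simplex
`{0 ≤ τ_k ≤ ⋯ ≤ τ₁ ≤ t}` of `u τ₁ ⋯ u τ_k • e^{(t-τ₁)A} B e^{(τ₁-τ₂)A} B ⋯ B e^{τ_k A} x₀`. -/
noncomputable def volterraTerm {n : ℕ} (A B : Matrix (Fin n) (Fin n) ℂ) (u : ℝ → ℂ)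
    (x₀ : Fin n → ℂ) : ℕ → ℝ → Fin n → ℂ
  | 0, t => (NormedSpace.exp (t • A)).mulVec x₀
  | k + 1, t => ∫ τ in (0:ℝ)..t,
      u τ • (NormedSpace.exp ((t - τ) • A)).mulVec (B.mulVec (volterraTerm A B u x₀ k τ))

/-!
Conjugating by `exp (-t A)` (the interaction picture) turns the system into the linear equation
`y' = G t y`, `y 0 = x₀`, with `G τ = u τ • exp (-τ A) B exp (τ A)`, and the `k`-th Volterra term
is `exp (t A)` applied to the `k`-th Picard iterate of this equation. If `‖G‖ ≤ K` and `‖y‖ ≤ C`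
on `[0, t]`, the `k`-th iterate is bounded by `‖x₀‖ (K t)^k / k!` and the remainder
`y - ∑_{k<N}` by `C (K t)^N / N!`, both by the same integration of `τ^m`; this gives absolute
convergence of the Picard series to `y t`, and applying `exp (t A)` gives the theorem.
-/

open Set Finset
open scoped Nat

section Picard

variable {𝕜 E : Type*} [NontriviallyNormedField 𝕜] [NormedAddCommGroup E] [NormedSpace 𝕜 E]
  [NormedSpace ℝ E]

noncomputable def picardSeq (G : ℝ → E →L[𝕜] E) (y₀ : E) : ℕ → ℝ → E
  | 0, _ => y₀
  | k + 1, t => ∫ τ in (0:ℝ)..t, G τ (picardSeq G y₀ k τ)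

variable {G : ℝ → E →L[𝕜] E}

theorem continuous_picardSeq (hG : Continuous G) (y₀ : E) : ∀ k, Continuous (picardSeq G y₀ k)
  | 0 => continuous_const
  | k + 1 => continuous_primitive
      (fun a b => (hG.clm_apply (continuous_picardSeq hG y₀ k)).intervalIntegrable a b) 0

theorem norm_integral_apply_le_pow_div_factorial {f : ℝ → E} {K C t : ℝ} {m : ℕ} (ht : 0 ≤ t)
    (hG : ∀ τ ∈ Ioc 0 t, ‖G τ‖ ≤ K) (hf : ∀ τ ∈ Ioc 0 t, ‖f τ‖ ≤ C * (K * τ) ^ m / m !) :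
    ‖∫ τ in (0:ℝ)..t, G τ (f τ)‖ ≤ C * (K * t) ^ (m + 1) / (m + 1)! := by
  calc ‖∫ τ in (0:ℝ)..t, G τ (f τ)‖
      ≤ ∫ τ in (0:ℝ)..t, C * K ^ (m + 1) / m ! * τ ^ m := by
        refine norm_integral_le_of_norm_le ht (ae_of_all _ fun τ hτ => ?_)
          (by apply Continuous.intervalIntegrable; fun_prop)
        calc ‖G τ (f τ)‖ ≤ K * (C * (K * τ) ^ m / m !) :=
              (G τ).le_of_opNorm_le_of_le (hG τ hτ) (hf τ hτ)
          _ = C * K ^ (m + 1) / m ! * τ ^ m := by ring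
    _ = C * (K * t) ^ (m + 1) / (m + 1)! := by
        rw [intervalIntegral.integral_const_mul, integral_pow, Nat.factorial_succ]
        push_cast
        field_simp
        ring

theorem norm_picardSeq_le {K T : ℝ} (hG : ∀ τ ∈ Icc 0 T, ‖G τ‖ ≤ K) (y₀ : E) (k : ℕ) :
    ∀ t ∈ Icc 0 T, ‖picardSeq G y₀ k t‖ ≤ ‖y₀‖ * (K * t) ^ k / k ! := by
  induction k with
  | zero => simp [picardSeq]
  | succ k ih =>
    intro t ht
    exact norm_integral_apply_le_pow_div_factorial ht.1
      (fun τ hτ => hG τ ⟨hτ.1.le, hτ.2.trans ht.2⟩) (fun τ hτ => ih τ ⟨hτ.1.le, hτ.2.trans ht.2⟩)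

variable [CompleteSpace E] {y : ℝ → E}

theorem sub_sum_picardSeq_succ (hG : Continuous G) (hy : ∀ t, HasDerivAt y (G t (y t)) t)
    (N : ℕ) (s : ℝ) :
    y s - ∑ k ∈ range (N + 1), picardSeq G (y 0) k s
      = ∫ τ in (0:ℝ)..s, G τ (y τ - ∑ k ∈ range N, picardSeq G (y 0) k τ) := by
  have hy_cont : Continuous y := continuous_iff_continuousAt.2 fun t => (hy t).continuousAt
  have hGP_cont k : Continuous fun τ => G τ (picardSeq G (y 0) k τ) :=
    hG.clm_apply (continuous_picardSeq hG _ k)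
  have hy_int : y s = y 0 + ∫ τ in (0:ℝ)..s, G τ (y τ) := by
    rw [integral_eq_sub_of_hasDerivAt (fun τ _ => hy τ)
      ((hG.clm_apply hy_cont).intervalIntegrable 0 s), add_sub_cancel]
  have hsum : ∑ k ∈ range (N + 1), picardSeq G (y 0) k s
      = y 0 + ∫ τ in (0:ℝ)..s, ∑ k ∈ range N, G τ (picardSeq G (y 0) k τ) := by
    rw [sum_range_succ', integral_finsetSum fun k _ => (hGP_cont k).intervalIntegrable 0 s,
      add_comm]
    rfl
  simp_rw [map_sub, map_sum]
  rw [hsum, integral_sub ((hG.clm_apply hy_cont).intervalIntegrable 0 s)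
    ((continuous_finsetSum _ fun k _ => hGP_cont k).intervalIntegrable 0 s)]
  conv_lhs => rw [hy_int]
  abel

theorem norm_sub_sum_picardSeq_le (hG : Continuous G) (hy : ∀ t, HasDerivAt y (G t (y t)) t)
    {K C T : ℝ} (hGK : ∀ τ ∈ Icc 0 T, ‖G τ‖ ≤ K) (hyC : ∀ τ ∈ Icc 0 T, ‖y τ‖ ≤ C) (N : ℕ) :
    ∀ s ∈ Icc 0 T, ‖y s - ∑ k ∈ range N, picardSeq G (y 0) k s‖ ≤ C * (K * s) ^ N / N ! := by
  induction N with
  | zero => simpa using hyC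
  | succ N ih =>
    intro s hs
    rw [sub_sum_picardSeq_succ hG hy]
    exact norm_integral_apply_le_pow_div_factorial hs.1
      (fun τ hτ => hGK τ ⟨hτ.1.le, hτ.2.trans hs.2⟩) (fun τ hτ => ih τ ⟨hτ.1.le, hτ.2.trans hs.2⟩)

theorem hasSum_picardSeq (hG : Continuous G) (hy : ∀ t, HasDerivAt y (G t (y t)) t) {t : ℝ}
    (ht : 0 ≤ t) :
    (Summable fun k => ‖picardSeq G (y 0) k t‖) ∧
      HasSum (fun k => picardSeq G (y 0) k t) (y t) := by
  have hy_cont : Continuous y := continuous_iff_continuousAt.2 fun t => (hy t).continuousAt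
  obtain ⟨K, hK⟩ := (isCompact_Icc (a := 0) (b := t)).exists_bound_of_continuousOn hG.continuousOn
  obtain ⟨C, hC⟩ :=
    (isCompact_Icc (a := 0) (b := t)).exists_bound_of_continuousOn hy_cont.continuousOn
  have ht' : t ∈ Icc 0 t := ⟨ht, le_rfl⟩
  have hsum : Summable fun k => ‖picardSeq G (y 0) k t‖ := by
    refine .of_nonneg_of_le (fun k => norm_nonneg _) (fun k => norm_picardSeq_le hK _ k t ht') ?_
    simpa only [mul_div_assoc] using (Real.summable_pow_div_factorial (K * t)).mul_left ‖y 0‖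
  refine ⟨hsum, (hasSum_iff_tendsto_nat_of_summable_norm hsum).2 ?_⟩
  rw [← tendsto_sub_nhds_zero_iff]
  refine squeeze_zero_norm (fun N => ?_) (by
    simpa only [mul_div_assoc, mul_zero] using
      (FloorSemiring.tendsto_pow_div_factorial_atTop (K * t)).const_mul C)
  rw [norm_sub_rev]
  exact (norm_sub_sum_picardSeq_le hG hy hK hC N t ht').trans_eq (mul_div_assoc _ _ _)

end Picard

section InteractionPicture

open NormedSpace

variable {E : Type*} [NormedAddCommGroup E] [NormedSpace ℂ E] [CompleteSpace E]

-- The lemmas about `NormedSpace.exp` need a `ℚ`-normed-algebra structure, which Mathlib does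
-- not register on operator algebras; `exp` itself does not depend on the choice.
noncomputable local instance : NormedAlgebra ℚ (E →L[ℂ] E) := .restrictScalars ℚ ℂ _

variable (A B : E →L[ℂ] E) (u : ℝ → ℂ)

noncomputable def interactionOp (τ : ℝ) : E →L[ℂ] E :=
  u τ • (exp ((-τ) • A) * B * exp (τ • A))

theorem exp_add_smul (s r : ℝ) : exp ((s + r) • A) = exp (s • A) * exp (r • A) := by
  rw [add_smul]
  exact exp_add_of_commute (((Commute.refl A).smul_left s).smul_right r)

theorem exp_smul_apply_exp_neg_smul_apply (s : ℝ) (w : E) : exp (s • A) (exp ((-s) • A) w) = w := by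
  rw [← mul_apply_eq_comp, ← exp_add_smul, add_neg_cancel, zero_smul, exp_zero,
    one_apply_eq_self]

variable {A B u}

theorem continuous_interactionOp (hu : Continuous u) : Continuous (interactionOp A B u) := by
  unfold interactionOp; fun_prop

omit [CompleteSpace E] in
theorem HasDerivAt.complex_clm_apply {F : Type*} [NormedAddCommGroup F] [NormedSpace ℂ F]
    {c : ℝ → E →L[ℂ] F} {c' : E →L[ℂ] F} {v : ℝ → E} {v' : E} {t : ℝ}
    (hc : HasDerivAt c c' t) (hv : HasDerivAt v v' t) :
    HasDerivAt (fun s => c s (v s)) (c' (v t) + c t v') t :=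
  ((ContinuousLinearMap.restrictScalarsL ℂ E F ℝ ℝ).hasFDerivAt.comp_hasDerivAt t hc).clm_apply hv

theorem hasDerivAt_exp_neg_smul_apply {x : ℝ → E} {t : ℝ}
    (hx : HasDerivAt x (A (x t) + u t • B (x t)) t) :
    HasDerivAt (fun s => exp ((-s) • A) (x s))
      (interactionOp A B u t (exp ((-t) • A) (x t))) t := by
  have hexp := hasDerivAt_exp_smul_const (-A) t
  simp only [smul_neg, ← neg_smul] at hexp
  convert hexp.complex_clm_apply hx using 1
  rw [interactionOp, smul_apply, mul_apply_eq_comp, mul_apply_eq_comp,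
    exp_smul_apply_exp_neg_smul_apply, mul_neg, neg_apply, mul_apply_eq_comp, map_add,
    (exp ((-t) • A)).map_smul]
  abel

theorem hasSum_exp_smul_apply_picardSeq (hu : Continuous u) {x : ℝ → E}
    (hx : ∀ t, HasDerivAt x (A (x t) + u t • B (x t)) t) {t : ℝ} (ht : 0 ≤ t) :
    (Summable fun k => ‖exp (t • A) (picardSeq (interactionOp A B u) (x 0) k t)‖) ∧
      HasSum (fun k => exp (t • A) (picardSeq (interactionOp A B u) (x 0) k t)) (x t) := by
  obtain ⟨hsum, hy⟩ := hasSum_picardSeq (y := fun s => exp ((-s) • A) (x s))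
    (continuous_interactionOp hu) (fun s => hasDerivAt_exp_neg_smul_apply (hx s)) ht
  simp only [neg_zero, zero_smul, exp_zero, one_apply_eq_self] at hsum hy
  refine ⟨.of_nonneg_of_le (fun k => norm_nonneg _) (fun k => (exp (t • A)).le_opNorm _)
    (hsum.mul_left _), ?_⟩
  simpa only [exp_smul_apply_exp_neg_smul_apply] using (exp (t • A)).hasSum hy

end InteractionPicture

section MatrixExp

open NormedSpace

variable {ι : Type*} [Fintype ι] [DecidableEq ι]

noncomputable def Matrix.toCLM' : Matrix ι ι ℂ ≃ₐ[ℂ] ((ι → ℂ) →L[ℂ] (ι → ℂ)) :=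
  Matrix.toLinAlgEquiv'.trans (Module.End.toContinuousLinearMap (ι → ℂ))

theorem Matrix.toCLM'_apply (M : Matrix ι ι ℂ) (v : ι → ℂ) : Matrix.toCLM' M v = M.mulVec v := rfl

noncomputable local instance : NormedAlgebra ℚ ((ι → ℂ) →L[ℂ] (ι → ℂ)) := .restrictScalars ℚ ℂ _

theorem Matrix.toCLM'_exp (M : Matrix ι ι ℂ) : Matrix.toCLM' (exp M) = exp (Matrix.toCLM' M) := by
  let : NormedRing (Matrix ι ι ℂ) := Matrix.linftyOpNormedRing
  let : NormedAlgebra ℂ (Matrix ι ι ℂ) := Matrix.linftyOpNormedAlgebra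
  let : NormedAlgebra ℚ (Matrix ι ι ℂ) := .restrictScalars ℚ ℂ _
  exact map_exp _ (LinearMap.continuous_of_finiteDimensional Matrix.toCLM'.toLinearMap) M

theorem Matrix.exp_smul_mulVec (M : Matrix ι ι ℂ) (t : ℝ) (v : ι → ℂ) :
    (exp (t • M)).mulVec v = exp (t • Matrix.toCLM' M) v := by
  rw [← Matrix.toCLM'_apply, Matrix.toCLM'_exp, ← Complex.coe_smul, map_smul]
  rfl

theorem volterraTerm_eq_exp_smul_apply_picardSeq {n : ℕ} (A B : Matrix (Fin n) (Fin n) ℂ)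
    {u : ℝ → ℂ} (hu : Continuous u) (x₀ : Fin n → ℂ) (k : ℕ) (t : ℝ) :
    volterraTerm A B u x₀ k t = exp (t • Matrix.toCLM' A)
      (picardSeq (interactionOp (Matrix.toCLM' A) (Matrix.toCLM' B) u) x₀ k t) := by
  induction k generalizing t with
  | zero => exact Matrix.exp_smul_mulVec A t x₀
  | succ k ih =>
    have hG := continuous_interactionOp (A := Matrix.toCLM' A) (B := Matrix.toCLM' B) hu
    rw [volterraTerm, picardSeq, ← ContinuousLinearMap.intervalIntegral_comp_comm _
      ((hG.clm_apply (continuous_picardSeq hG x₀ k)).intervalIntegrable 0 t)]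
    refine integral_congr fun τ _ => ?_
    rw [ih, Matrix.exp_smul_mulVec, ← Matrix.toCLM'_apply B, sub_eq_add_neg, exp_add_smul,
      interactionOp, smul_apply, map_smul, mul_apply_eq_comp, mul_apply_eq_comp, mul_apply_eq_comp]

end MatrixExp

theorem stmt_2_general {n : ℕ} (A B : Matrix (Fin n) (Fin n) ℂ) (u : ℝ → ℂ) (hu : Continuous u)
    (T : ℝ)
    (x₀ : Fin n → ℂ) (x : ℝ → Fin n → ℂ) (hx0 : x 0 = x₀)
    (hx : ∀ t : ℝ, HasDerivAt x (A.mulVec (x t) + u t • B.mulVec (x t)) t) :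
    ∀ t ∈ Set.Icc (0:ℝ) T,
      (Summable fun k : ℕ => ‖volterraTerm A B u x₀ k t‖) ∧
      x t = ∑' k : ℕ, volterraTerm A B u x₀ k t := by
  intro t ht
  obtain ⟨hsum, hx_sum⟩ := hasSum_exp_smul_apply_picardSeq (A := Matrix.toCLM' A)
    (B := Matrix.toCLM' B) hu hx ht.1
  simp only [hx0, ← volterraTerm_eq_exp_smul_apply_picardSeq A B hu] at hsum hx_sum
  exact ⟨hsum, hx_sum.tsum_eq.symm⟩

/-- **Volterra series expansion of the bilinear system.** If `|u| ≤ M` on `[0, T]` and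
`x' = A x + u • B x`, `x 0 = x₀`, then for all `t ∈ [0, T]` the Volterra series converges
absolutely and sums to `x t`. -/
theorem stmt_2 {n : ℕ} (A B : Matrix (Fin n) (Fin n) ℂ) (u : ℝ → ℂ) (hu : Continuous u)
    (M T : ℝ) (hM : ∀ t ∈ Set.Icc (0:ℝ) T, ‖u t‖ ≤ M)
    (x₀ : Fin n → ℂ) (x : ℝ → Fin n → ℂ) (hx0 : x 0 = x₀)
    (hx : ∀ t : ℝ, HasDerivAt x (A.mulVec (x t) + u t • B.mulVec (x t)) t) :
    ∀ t ∈ Set.Icc (0:ℝ) T,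
      (Summable fun k : ℕ => ‖volterraTerm A B u x₀ k t‖) ∧
      x t = ∑' k : ℕ, volterraTerm A B u x₀ k t :=
  stmt_2_general A B u hu T x₀ x hx0 hx
end

section
/- With notation as in the previous statement, the k-th term of the Volterra expansion is bounded in norm by (M ‖B‖)^k e^{‖A‖ t} t^k / k! · ‖x₀‖, so the Volterra series converges for all t ≥ 0. -/
open MeasureTheory intervalIntegral

attribute [local instance] Matrix.linftyOpNormedRing Matrix.linftyOpNormedAlgebra

/-
The terms satisfy `x_{k+1}(s) = ∫₀ˢ u τ e^{(s-τ)A} B x_k(τ) dτ`, so with `‖e^{rA}‖ ≤ e^{r‖A‖}`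
an induction on `k` gives `‖x_k(s)‖ ≤ (M‖B‖)^k e^{‖A‖s} ‖x₀‖ · ∫₀ˢ τ^{k-1}/(k-1)! dτ`,
which is the claimed bound; the bounds are the terms of the exponential series of `M‖B‖t`,
scaled by `e^{‖A‖t}‖x₀‖`, hence summable.
-/

open NormedSpace Set Nat
open scoped Matrix

/-- Square matrices over an empty index type form the zero ring, where `‖1‖ = 0`; hence
`‖1‖ ≤ 1` instead of `NormOneClass`. -/
theorem norm_pow_le_of_norm_one_le {α : Type*} [SeminormedRing α] (h1 : ‖(1 : α)‖ ≤ 1)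
    (a : α) (k : ℕ) : ‖a ^ k‖ ≤ ‖a‖ ^ k := by
  rcases k.eq_zero_or_pos with rfl | hk
  · simpa using h1
  · exact norm_pow_le' a hk

theorem NormedSpace.norm_exp_le_exp_norm_of_norm_one_le {𝔸 : Type*} [NormedRing 𝔸]
    [NormedAlgebra ℝ 𝔸] (h1 : ‖(1 : 𝔸)‖ ≤ 1) (x : 𝔸) : ‖exp x‖ ≤ Real.exp ‖x‖ := by
  rw [exp_eq_tsum ℝ, Real.exp_eq_exp_ℝ, exp_eq_tsum_div]
  calc ‖∑' k : ℕ, ((k ! : ℝ)⁻¹ • x ^ k)‖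
      ≤ ∑' k : ℕ, ‖(k ! : ℝ)⁻¹ • x ^ k‖ := norm_tsum_le_tsum_norm (norm_expSeries_summable' x)
    _ ≤ ∑' k : ℕ, ‖x‖ ^ k / k ! := by
      refine Summable.tsum_le_tsum (fun k => ?_) (norm_expSeries_summable' x)
        (Real.summable_pow_div_factorial ‖x‖)
      rw [norm_smul, norm_inv, RCLike.norm_natCast, inv_mul_eq_div]
      gcongr
      exact norm_pow_le_of_norm_one_le h1 x k

theorem Matrix.linfty_opNorm_one_le {m α : Type*} [Fintype m] [DecidableEq m] [NormedRing α]
    [NormOneClass α] : ‖(1 : Matrix m m α)‖ ≤ 1 := by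
  rw [← diagonal_one, linfty_opNorm_diagonal]
  exact (pi_norm_le_iff_of_nonneg zero_le_one).2 fun _ => norm_one.le

theorem Matrix.norm_exp_smul_mulVec_le {m 𝕜 : Type*} [Fintype m] [DecidableEq m] [RCLike 𝕜]
    (A : Matrix m m 𝕜) {s : ℝ} (hs : 0 ≤ s) (v : m → 𝕜) :
    ‖exp (s • A) *ᵥ v‖ ≤ Real.exp (‖A‖ * s) * ‖v‖ := by
  refine (linfty_opNorm_mulVec _ v).trans ?_
  gcongr
  refine (norm_exp_le_exp_norm_of_norm_one_le linfty_opNorm_one_le _).trans ?_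
  gcongr
  refine (norm_smul_le s A).trans_eq ?_
  rw [Real.norm_of_nonneg hs, mul_comm]

section Volterra

variable {n : ℕ} (A B : Matrix (Fin n) (Fin n) ℂ) (u : ℝ → ℂ) (x₀ : Fin n → ℂ)

theorem norm_volterraTerm_le {M s : ℝ} (hs : 0 ≤ s) (hM : ∀ τ ∈ Icc 0 s, ‖u τ‖ ≤ M) (k : ℕ) :
    ‖volterraTerm A B u x₀ k s‖ ≤
      (M * ‖B‖) ^ k * Real.exp (‖A‖ * s) * s ^ k / k ! * ‖x₀‖ := by
  induction k generalizing s with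
  | zero => simpa [volterraTerm] using Matrix.norm_exp_smul_mulVec_le A hs x₀
  | succ k ih =>
    have hM0 : 0 ≤ M := (norm_nonneg _).trans (hM 0 ⟨le_rfl, hs⟩)
    set C := (M * ‖B‖) ^ (k + 1) * Real.exp (‖A‖ * s) / k ! * ‖x₀‖ with hC
    have hintegrand : ∀ τ ∈ Ioc 0 s, ‖u τ • exp ((s - τ) • A) *ᵥ
        (B *ᵥ volterraTerm A B u x₀ k τ)‖ ≤ C * τ ^ k := by
      rintro τ ⟨hτ0, hτs⟩
      have ih_τ := ih hτ0.le fun r hr => hM r ⟨hr.1, hr.2.trans hτs⟩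
      calc _ ≤ M * (Real.exp (‖A‖ * (s - τ)) * (‖B‖ * ‖volterraTerm A B u x₀ k τ‖)) := by
            rw [norm_smul]
            gcongr
            · exact hM τ ⟨hτ0.le, hτs⟩
            · refine (Matrix.norm_exp_smul_mulVec_le A (sub_nonneg.2 hτs) _).trans ?_
              gcongr
              exact Matrix.linfty_opNorm_mulVec B _
        _ ≤ M * (Real.exp (‖A‖ * (s - τ)) *
              (‖B‖ * ((M * ‖B‖) ^ k * Real.exp (‖A‖ * τ) * τ ^ k / k ! * ‖x₀‖))) := by
            gcongr
        _ = C * τ ^ k := by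
            have hexp : Real.exp (‖A‖ * (s - τ)) * Real.exp (‖A‖ * τ) = Real.exp (‖A‖ * s) := by
              rw [← Real.exp_add]; ring_nf
            rw [hC, ← hexp]
            ring
    calc ‖volterraTerm A B u x₀ (k + 1) s‖ ≤ ∫ τ in (0:ℝ)..s, C * τ ^ k :=
          norm_integral_le_of_norm_le hs (ae_of_all _ hintegrand) ((by fun_prop :
            Continuous fun τ : ℝ => C * τ ^ k).intervalIntegrable 0 s)
      _ = _ := by
          rw [intervalIntegral.integral_const_mul, integral_pow, hC, factorial_succ]
          push_cast
          field_simp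
          ring

end Volterra

theorem stmt_3_general {n : ℕ} (A B : Matrix (Fin n) (Fin n) ℂ) (u : ℝ → ℂ)
    (x₀ : Fin n → ℂ) (M : ℝ) (t : ℝ) (ht : 0 ≤ t)
    (hM : ∀ τ ∈ Set.Icc (0:ℝ) t, ‖u τ‖ ≤ M) :
    (∀ k : ℕ, ‖volterraTerm A B u x₀ k t‖ ≤
        (M * ‖B‖) ^ k * Real.exp (‖A‖ * t) * t ^ k / (Nat.factorial k) * ‖x₀‖) ∧
      Summable fun k : ℕ => ‖volterraTerm A B u x₀ k t‖ := by
  have hbound := norm_volterraTerm_le A B u x₀ ht hM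
  refine ⟨hbound, .of_nonneg_of_le (fun _ => norm_nonneg _) hbound ?_⟩
  refine ((Real.summable_pow_div_factorial (M * ‖B‖ * t)).mul_right
    (Real.exp (‖A‖ * t) * ‖x₀‖)).congr fun k => ?_
  rw [mul_pow]
  ring

/-- **Bound on the `k`-th Volterra term.** If `|u| ≤ M` on `[0, t]`, the `k`-th term of the
Volterra expansion is bounded in norm by `(M ‖B‖)^k e^{‖A‖ t} t^k / k! ⬝ ‖x₀‖`, hence the
Volterra series converges (the norms are summable) for every `t ≥ 0`. -/
theorem stmt_3 {n : ℕ} (A B : Matrix (Fin n) (Fin n) ℂ) (u : ℝ → ℂ) (hu : Continuous u)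
    (x₀ : Fin n → ℂ) (M : ℝ) (t : ℝ) (ht : 0 ≤ t)
    (hM : ∀ τ ∈ Set.Icc (0:ℝ) t, ‖u τ‖ ≤ M) :
    (∀ k : ℕ, ‖volterraTerm A B u x₀ k t‖ ≤
        (M * ‖B‖) ^ k * Real.exp (‖A‖ * t) * t ^ k / (Nat.factorial k) * ‖x₀‖) ∧
      Summable fun k : ℕ => ‖volterraTerm A B u x₀ k t‖ :=
  stmt_3_general A B u x₀ M t ht hM
end

section
/- Let G = (S, C, Ω) be a linear quantum input-output system with A = −C†C/2 − iΩ, where C is an r×r complex matrix, Ω is Hermitian, and S unitary. Then the transfer function Ξ(s) = S − C (sI − A)^{-1} C† S satisfies Ξ(iω)† Ξ(iω) = I for all real ω such that iω is not an eigenvalue of A (i.e., the transfer function is all-pass on the imaginary axis). -/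
open Matrix

/-- **The transfer function of a linear quantum input-output system is all-pass.**
For `G = (S, C, Ω)` with `A = -C†C/2 - iΩ`, `Ω` Hermitian and `S` unitary, the transfer
function `Ξ(s) = S - C (sI - A)⁻¹ C† S` satisfies `Ξ(iω)† Ξ(iω) = I` for every real `ω`
such that `iω` is not an eigenvalue of `A` (i.e. `iω I - A` is invertible). -/
theorem stmt_6 {r : ℕ} (C Ω S : Matrix (Fin r) (Fin r) ℂ)
    (hΩ : Ωᴴ = Ω) (hS : Sᴴ * S = 1 ∧ S * Sᴴ = 1)
    (A : Matrix (Fin r) (Fin r) ℂ)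
    (hA : A = -((1/2 : ℂ) • (Cᴴ * C)) - Complex.I • Ω) :
    ∀ ω : ℝ, IsUnit ((Complex.I * ω) • (1 : Matrix (Fin r) (Fin r) ℂ) - A) →
      (S - C * ((Complex.I * ω) • (1 : Matrix (Fin r) (Fin r) ℂ) - A)⁻¹ * (Cᴴ * S))ᴴ
        * (S - C * ((Complex.I * ω) • (1 : Matrix (Fin r) (Fin r) ℂ) - A)⁻¹ * (Cᴴ * S))
        = 1 := by
  intro ω hU
  set M := (Complex.I * ω) • (1 : Matrix (Fin r) (Fin r) ℂ) - A with hM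
  have hdet : IsUnit M.det := (isUnit_iff_isUnit_det M).mp hU
  have hMinv : M * M⁻¹ = 1 := mul_nonsing_inv M hdet
  have hinvM : M⁻¹ * M = 1 := nonsing_inv_mul M hdet
  have hinvMH : (M⁻¹)ᴴ * Mᴴ = 1 := by
    rw [← conjTranspose_mul, hMinv, conjTranspose_one]
  -- key identity: Cᴴ C = M + Mᴴ
  have hkey : Cᴴ * C = M + Mᴴ := by
    have h1 : star (Complex.I * (ω:ℂ)) = -(Complex.I * ω) := by
      simp [Complex.star_def, Complex.conj_I, mul_comm]
    have h2 : star (1/2 : ℂ) = (1/2 : ℂ) := by norm_num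
    have h3 : star Complex.I = -Complex.I := Complex.conj_I
    simp only [hM, hA, conjTranspose_sub, conjTranspose_smul, conjTranspose_one,
      conjTranspose_neg, conjTranspose_mul, conjTranspose_conjTranspose, hΩ, h1, h2, h3]
    module
  -- central computation
  have hmid : (M⁻¹)ᴴ * (Cᴴ * C) * M⁻¹ = (M⁻¹)ᴴ + M⁻¹ := by
    rw [hkey, Matrix.mul_add, Matrix.add_mul, Matrix.mul_assoc, hMinv, mul_one,
      hinvMH, Matrix.one_mul]
  obtain ⟨hS1, _⟩ := hS
  rw [conjTranspose_sub, conjTranspose_mul, conjTranspose_mul, conjTranspose_mul,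
    conjTranspose_conjTranspose]
  rw [sub_mul, mul_sub, mul_sub, hS1]
  have expand : Sᴴ * C * (M⁻¹ᴴ * Cᴴ) * (C * M⁻¹ * (Cᴴ * S))
      = Sᴴ * C * ((M⁻¹)ᴴ * (Cᴴ * C) * M⁻¹) * (Cᴴ * S) := by
    noncomm_ring
  rw [expand, hmid]
  have e1 : Sᴴ * (C * M⁻¹ * (Cᴴ * S)) = Sᴴ * C * M⁻¹ * (Cᴴ * S) := by noncomm_ring
  have e2 : Sᴴ * C * (M⁻¹ᴴ * Cᴴ) * S = Sᴴ * C * M⁻¹ᴴ * (Cᴴ * S) := by noncomm_ring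
  rw [e1, e2, Matrix.mul_add, Matrix.add_mul]
  noncomm_ring
end

section
/- Let A be the 8×8 block upper-triangular matrix of Eq. (33) in the paper (diagonal entries 0, −(γ/2+iω_a), −(γ/2−iω_a), −γ, −(γ+2iω_a), −(γ−2iω_a), −(3γ/2+iω̃_a), −(3γ/2−iω̃_a), with the only off-diagonal nonzero entries A_{2,7} = −2iχ and A_{3,8} = 2iχ). Then for γ > 0 the matrix exponential exp(tA) converges as t → ∞ to the rank-one projection onto the first coordinate, i.e., exp(tA) → e₁ e₁ᵀ. -/
open Matrix Complex Filter Topology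

/-! The couplings at the (0-indexed) entries `(1, 6)` and `(2, 7)` join diagonal entries whose
difference has real part `-γ ≠ 0`, so they are removed by conjugating with a shear `1 + N`, where
`N` is supported on those two entries and `N² = 0`. Hence `exp (t A) = (1 + N) exp (t D) (1 - N)`
with `D` diagonal. All eigenvalues but the first have negative real part, so `exp (t D) → E₀₀`,
and `N` vanishes on row and column `0`, so `(1 + N) E₀₀ (1 - N) = E₀₀`. -/

section Ring

variable {R : Type*} [Ring R]

def Units.oneAddOfMulSelfEqZero {N : R} (hN : N * N = 0) : Rˣ where
  val := 1 + N
  inv := 1 - N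
  val_inv := calc (1 + N) * (1 - N) = 1 - N * N := by noncomm_ring
    _ = 1 := by rw [hN, sub_zero]
  inv_val := calc (1 - N) * (1 + N) = 1 - N * N := by noncomm_ring
    _ = 1 := by rw [hN, sub_zero]

theorem one_add_mul_mul_one_sub_of_mul_mul_eq_zero {N D : R} (h : N * D * N = 0) :
    (1 + N) * D * (1 - N) = D + (N * D - D * N) :=
  calc (1 + N) * D * (1 - N) = D + (N * D - D * N) - N * D * N := by noncomm_ring
    _ = D + (N * D - D * N) := by rw [h, sub_zero]

end Ring

namespace Matrix

variable {n α : Type*} [Fintype n] [DecidableEq n]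

theorem single_mul_diagonal_sub_diagonal_mul_single [CommRing α] (i j : n) (c : α)
    (d : n → α) :
    single i j c * diagonal d - diagonal d * single i j c = single i j (c * (d j - d i)) := by
  ext a b
  simp only [sub_apply, mul_diagonal, diagonal_mul, single_apply]
  split_ifs <;> simp_all [mul_sub, mul_comm]

theorem tendsto_exp_smul_diagonal {d : n → ℂ} {i₀ : n} (h₀ : d i₀ = 0)
    (hneg : ∀ i ≠ i₀, (d i).re < 0) :
    Tendsto (fun t : ℝ => NormedSpace.exp (t • diagonal d)) atTop (𝓝 (single i₀ i₀ 1)) := by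
  have hexp (t : ℝ) : NormedSpace.exp (t • diagonal d) = diagonal fun i => cexp (t * d i) := by
    rw [← diagonal_smul, exp_diagonal, Pi.exp_def]
    simp only [Pi.smul_apply, Complex.exp_eq_exp_ℂ, Complex.real_smul]
  simp_rw [hexp]
  rw [← diagonal_single]
  refine (continuous_id.matrix_diagonal.tendsto _).comp (tendsto_pi_nhds.2 fun i => ?_)
  obtain rfl | hi := eq_or_ne i i₀
  · simp [h₀]
  · rw [Function.update_of_ne hi, Pi.zero_apply, Complex.tendsto_exp_nhds_zero_iff]
    simp_rw [re_ofReal_mul]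
    exact tendsto_id.atTop_mul_const_of_neg (hneg i hi)

theorem tendsto_exp_smul_units_conj (u : (Matrix n n ℂ)ˣ) {M L : Matrix n n ℂ}
    (h : Tendsto (fun t : ℝ => NormedSpace.exp (t • M)) atTop (𝓝 L)) :
    Tendsto (fun t : ℝ => NormedSpace.exp (t • (u * M * u⁻¹ : Matrix n n ℂ))) atTop
      (𝓝 (u * L * u⁻¹)) := by
  have hconj (t : ℝ) : t • (u * M * u⁻¹ : Matrix n n ℂ) = u * (t • M) * u⁻¹ := by
    rw [mul_smul_comm, smul_mul_assoc]
  simp_rw [hconj, exp_units_conj]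
  exact (tendsto_const_nhds.mul h).mul tendsto_const_nhds

end Matrix

/-- **Long-time limit of the Kerr-cavity generator (Eq. (33)).** Let `A` be the 8×8
upper-triangular matrix with diagonal
`(0, -(γ/2+iω_a), -(γ/2-iω_a), -γ, -(γ+2iω_a), -(γ-2iω_a), -(3γ/2+iω̃_a), -(3γ/2-iω̃_a))`
(`ω̃_a = ω_a - χ`) and only off-diagonal nonzero entries `A₂₇ = -2iχ`, `A₃₈ = 2iχ`.
Then for `γ > 0`, `exp (t A) → e₁ e₁ᵀ` as `t → ∞`. -/
theorem stmt_15 (γ ωa χ : ℝ) (hγ : 0 < γ)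
    (A : Matrix (Fin 8) (Fin 8) ℂ)
    (hA : A =
      Matrix.diagonal
        ![0, -((γ:ℂ)/2 + I * ωa), -((γ:ℂ)/2 - I * ωa), -(γ:ℂ),
          -((γ:ℂ) + 2 * I * ωa), -((γ:ℂ) - 2 * I * ωa),
          -(3 * (γ:ℂ)/2 + I * ((ωa:ℂ) - χ)), -(3 * (γ:ℂ)/2 - I * ((ωa:ℂ) - χ))]
      + Matrix.single (1 : Fin 8) (6 : Fin 8) (-(2 * I * χ))
      + Matrix.single (2 : Fin 8) (7 : Fin 8) (2 * I * χ)) :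
    Tendsto (fun t : ℝ => NormedSpace.exp (t • A)) atTop
      (nhds (Matrix.single (0 : Fin 8) (0 : Fin 8) (1 : ℂ))) := by
  set d : Fin 8 → ℂ := ![0, -((γ:ℂ)/2 + I * ωa), -((γ:ℂ)/2 - I * ωa), -(γ:ℂ),
    -((γ:ℂ) + 2 * I * ωa), -((γ:ℂ) - 2 * I * ωa),
    -(3 * (γ:ℂ)/2 + I * ((ωa:ℂ) - χ)), -(3 * (γ:ℂ)/2 - I * ((ωa:ℂ) - χ))]
  have hre : ∀ i ≠ 0, (d i).re < 0 := by
    intro i hi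
    fin_cases i <;> simp [d] at hi ⊢ <;> linarith
  have h61 : d 6 - d 1 ≠ 0 := ne_of_apply_ne re (by simp [d]; linarith)
  have h72 : d 7 - d 2 ≠ 0 := ne_of_apply_ne re (by simp [d]; linarith)
  set N : Matrix (Fin 8) (Fin 8) ℂ := single 1 6 (-(2 * I * χ) / (d 6 - d 1))
    + single 2 7 (2 * I * χ / (d 7 - d 2))
  have hNN : N * N = 0 := by
    simp [N, add_mul, mul_add, single_mul_single_of_ne]
  have hNDN : N * diagonal d * N = 0 := by
    simp [N, add_mul, mul_add, single_mul_mul_single]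
  set u := Units.oneAddOfMulSelfEqZero hNN
  have hA' : A = (u * diagonal d * u⁻¹ : Matrix (Fin 8) (Fin 8) ℂ) := by
    change A = (1 + N) * diagonal d * (1 - N)
    rw [one_add_mul_mul_one_sub_of_mul_mul_eq_zero hNDN, add_mul, mul_add, add_sub_add_comm,
      single_mul_diagonal_sub_diagonal_mul_single, single_mul_diagonal_sub_diagonal_mul_single,
      div_mul_cancel₀ _ h61, div_mul_cancel₀ _ h72, hA, add_assoc]
  have hP : (1 + N) * single 0 0 1 * (1 - N) = single 0 0 1 := by
    simp [N, add_mul, mul_add, mul_sub]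
  rw [hA', ← hP]
  exact tendsto_exp_smul_units_conj _ (tendsto_exp_smul_diagonal rfl hre)
end
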